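/- Let $d \ge 2$ be an integer, $0 < C_+ \le C_-$, $A_+, B_+ > 0$, and $V_\infty > 0$. There exist constants $\gamma_0 > 0$, $c_0 > 0$, $\bar{t} > 0$, $\bar{c} > 0$, and $C_* > 0$, depending only on $d, C_+, C_-, A_+, B_+, V_\infty$, with the following property. Let $\gamma \in (0, \gamma_0]$, let $L \ge 1$ satisfy $L^{-(d-1)} \le c_0 \gamma$, set $V_0 = V_\infty - \gamma$ (assumed positive), and let $V : [0,\infty) \to \mathbb{R}$ be continuous with $V(0) = V_0$, $V(s) > V_0$ for all $s > 0$, and $\gamma e^{-C_- s} \le V_\infty - V(s) \le \gamma e^{-C_+ s} + \gamma^3 \frac{A_+}{(1+s)^{d+2}} + L^{-(d-1)} \frac{B_+}{(1+s/L)^{d-1}}$ for all $s \ge 0$. Then for every $t$ with $\bar{t}/2 \le t < \bar{c} \gamma L^{d-1}$ and every $s \in (0, s_0(t)]$: $V(t) - \langle V \rangle_{s,t} \ge C_* \frac{\gamma}{t}$. -/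

import Mathlib

open MeasureTheory Real

/-- Time average `⟨V⟩_{s,t} = (t-s)⁻¹ ∫_s^t V(σ) dσ`. -/
noncomputable def avg (V : ℝ → ℝ) (s t : ℝ) : ℝ :=
  (t - s)⁻¹ * ∫ σ in s..t, V σ

/-!
Put `S = log 4 / C₊` and `κ = e^{-C₋ S} / (12 C₋)`. For small `γ` and `L^{-(d-1)}` the upper
estimate gives `V(S) ≥ V∞ - γ/2`, while `⟨V⟩_{S,t} ≤ V∞`; so `S` lies in the set defining `s₀(t)`
and every admissible `s` satisfies `s ≤ S`. For such `s`, the lower estimate integrated over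
`[s, t]` gives `V∞ - ⟨V⟩_{s,t} ≥ 6κγ/t` once `t ≥ S + log 2 / C₋`, because `e^{-C₋ σ}` loses at
most half of its mass `e^{-C₋ S}` by time `t`. Each of the three terms of the upper estimate at
time `t` is at most `κγ/t` for `t̄/2 ≤ t < c̄ γ L^{d-1}`, so `V∞ - V(t) ≤ 3κγ/t`.
-/

section Average

variable {f g : ℝ → ℝ} {s t : ℝ}

lemma avg_mono_on (hst : s < t) (hf : IntervalIntegrable f volume s t)
    (hg : IntervalIntegrable g volume s t) (h : ∀ x ∈ Set.Icc s t, f x ≤ g x) :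
    avg f s t ≤ avg g s t :=
  mul_le_mul_of_nonneg_left (intervalIntegral.integral_mono_on hst.le hf hg h)
    (inv_nonneg.2 (sub_nonneg.2 hst.le))

lemma avg_const (c : ℝ) (hst : s ≠ t) : avg (fun _ => c) s t = c := by
  rw [avg, intervalIntegral.integral_const, smul_eq_mul,
    inv_mul_cancel_left₀ (sub_ne_zero.2 hst.symm)]

lemma avg_const_mul (c : ℝ) : avg (fun x => c * f x) s t = c * avg f s t := by
  simp only [avg, intervalIntegral.integral_const_mul]
  ring

lemma avg_const_sub (c : ℝ) (hst : s ≠ t) (hf : IntervalIntegrable f volume s t) :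
    avg (fun x => c - f x) s t = c - avg f s t := by
  have hc := avg_const c hst
  rw [avg] at hc ⊢
  rw [intervalIntegral.integral_sub intervalIntegrable_const hf, mul_sub, hc, avg]

lemma avg_le_of_le_on {c : ℝ} (hst : s < t) (hf : IntervalIntegrable f volume s t)
    (h : ∀ x ∈ Set.Icc s t, f x ≤ c) : avg f s t ≤ c :=
  (avg_mono_on hst hf intervalIntegrable_const h).trans_eq (avg_const c hst.ne)

lemma integral_exp_neg_mul {c : ℝ} (hc : c ≠ 0) :
    ∫ x in s..t, exp (-c * x) = (exp (-c * s) - exp (-c * t)) / c := by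
  rw [intervalIntegral.integral_comp_mul_left exp (neg_ne_zero.2 hc), integral_exp, smul_eq_mul]
  field_simp
  ring

lemma avg_exp_neg_mul {c : ℝ} (hc : c ≠ 0) :
    avg (fun x => exp (-c * x)) s t = (exp (-c * s) - exp (-c * t)) / (c * (t - s)) := by
  rw [avg, integral_exp_neg_mul hc]
  field_simp

/-- By time `S + log 2 / c` the profile `exp (-c x)` has dropped below half its value at `S`. -/
lemma exp_neg_mul_div_le_avg {c S : ℝ} (hc : 0 < c) (hs : 0 ≤ s) (hsS : s ≤ S)
    (ht : S + log 2 / c ≤ t) :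
    exp (-c * S) / (2 * c * t) ≤ avg (fun x => exp (-c * x)) s t := by
  have hlog : 0 < log 2 / c := div_pos (log_pos one_lt_two) hc
  have hst : s < t := by linarith
  have hes : exp (-c * S) ≤ exp (-c * s) := exp_le_exp.2 (by nlinarith)
  have het : exp (-c * t) ≤ exp (-c * S) / 2 := by
    calc exp (-c * t) ≤ exp (-c * S - log 2) := exp_le_exp.2 (by
          have := mul_le_mul_of_nonneg_left ht hc.le
          rw [mul_add, mul_div_cancel₀ _ hc.ne'] at this
          linarith)
      _ = exp (-c * S) / 2 := by rw [exp_sub, exp_log two_pos]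
  have ht0 : 0 < t := by linarith
  rw [avg_exp_neg_mul hc.ne', div_le_div_iff₀ (by positivity) (mul_pos hc (sub_pos.2 hst))]
  calc exp (-c * S) * (c * (t - s)) ≤ exp (-c * S) * (c * t) := by gcongr; linarith
    _ = exp (-c * S) / 2 * (2 * c * t) := by ring
    _ ≤ (exp (-c * s) - exp (-c * t)) * (2 * c * t) := by gcongr; linarith

end Average

lemma exp_neg_mul_le_two_div_sq {c t : ℝ} (hc : 0 < c) (ht : 0 < t) :
    exp (-c * t) ≤ 2 / (c * t) ^ 2 := by
  have h := pow_div_factorial_le_exp (c * t) (mul_pos hc ht).le 2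
  rw [neg_mul, exp_neg, ← one_div, div_le_div_iff₀ (exp_pos _) (by positivity)]
  norm_num at h
  linarith

/-- The envelope in the upper estimate of `V∞ - V(s)` (Theorem 3.1). -/
noncomputable def deficitEnvelope (γ Cp A B L : ℝ) (d : ℕ) (s : ℝ) : ℝ :=
  γ * exp (-Cp * s) + γ ^ 3 * (A / (1 + s) ^ (d + 2)) + B / (L ^ (d - 1) * (1 + s / L) ^ (d - 1))

section Envelope

variable {γ Cp A B L : ℝ} {d : ℕ} {s : ℝ}

lemma deficitEnvelope_le (hγ : 0 ≤ γ) (hA : 0 ≤ A) (hB : 0 ≤ B) (hL : 0 < L) (hs : 0 ≤ s) :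
    deficitEnvelope γ Cp A B L d s ≤
      γ * exp (-Cp * s) + γ ^ 3 * A / (1 + s) + B / L ^ (d - 1) := by
  have hpow : 1 + s ≤ (1 + s) ^ (d + 2) := le_self_pow₀ (by linarith) (by omega)
  have hA' : A / (1 + s) ^ (d + 2) ≤ A / (1 + s) := div_le_div_of_nonneg_left hA (by linarith) hpow
  have hB' : B / (L ^ (d - 1) * (1 + s / L) ^ (d - 1)) ≤ B / L ^ (d - 1) :=
    div_le_div_of_nonneg_left hB (by positivity)
      (le_mul_of_one_le_right (by positivity) (one_le_pow₀ (by linarith [div_nonneg hs hL.le])))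
  rw [deficitEnvelope, mul_div_assoc]
  gcongr

lemma deficitEnvelope_log_four_div_le (hγ : 0 ≤ γ) (hCp : 0 < Cp) (hA : 0 ≤ A) (hB : 0 ≤ B)
    (hL : 0 < L) (hγA : γ ^ 2 * A ≤ 1 / 8) (hBL : B / L ^ (d - 1) ≤ γ / 8) :
    deficitEnvelope γ Cp A B L d (log 4 / Cp) ≤ γ / 2 := by
  have hS : 0 ≤ log 4 / Cp := div_nonneg (log_nonneg (by norm_num)) hCp.le
  have hexp : exp (-Cp * (log 4 / Cp)) = 1 / 4 := by
    rw [neg_mul, mul_div_cancel₀ _ hCp.ne', exp_neg, exp_log (by norm_num), one_div]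
  have hA' : γ ^ 3 * A / (1 + log 4 / Cp) ≤ γ / 8 := by
    rw [div_le_iff₀ (by linarith)]
    nlinarith [mul_le_mul_of_nonneg_left hγA hγ]
  have := deficitEnvelope_le (Cp := Cp) (d := d) hγ hA hB hL hS
  rw [hexp] at this
  linarith

lemma deficitEnvelope_le_div {κ t : ℝ} (hγ : 0 ≤ γ) (hCp : 0 < Cp) (hA : 0 ≤ A) (hB : 0 ≤ B)
    (hL : 0 < L) (hκ : 0 < κ) (ht : 2 / (Cp ^ 2 * κ) ≤ t) (hγA : γ ^ 2 * A ≤ κ)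
    (hBL : B / L ^ (d - 1) ≤ κ * γ / t) :
    deficitEnvelope γ Cp A B L d t ≤ 3 * κ * γ / t := by
  have ht0 : 0 < t := (by positivity : (0 : ℝ) < 2 / (Cp ^ 2 * κ)).trans_le ht
  have hexp : γ * exp (-Cp * t) ≤ κ * γ / t := by
    have h2 : 2 / (Cp * t) ^ 2 ≤ κ / t := by
      rw [div_le_iff₀ (by positivity)] at ht
      rw [div_le_div_iff₀ (by positivity) ht0]
      nlinarith
    calc γ * exp (-Cp * t) ≤ γ * (κ / t) :=
          mul_le_mul_of_nonneg_left ((exp_neg_mul_le_two_div_sq hCp ht0).trans h2) hγ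
      _ = κ * γ / t := by ring
  have hA' : γ ^ 3 * A / (1 + t) ≤ κ * γ / t := by
    calc γ ^ 3 * A / (1 + t) ≤ γ ^ 3 * A / t :=
          div_le_div_of_nonneg_left (by positivity) ht0 (by linarith)
      _ ≤ κ * γ / t :=
          div_le_div_of_nonneg_right (by nlinarith [mul_le_mul_of_nonneg_left hγA hγ]) ht0.le
  calc deficitEnvelope γ Cp A B L d t
      ≤ γ * exp (-Cp * t) + γ ^ 3 * A / (1 + t) + B / L ^ (d - 1) :=
        deficitEnvelope_le hγ hA hB hL ht0.le
    _ ≤ κ * γ / t + κ * γ / t + κ * γ / t := by gcongr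
    _ = 3 * κ * γ / t := by ring

end Envelope

section Velocity

variable {V : ℝ → ℝ} {Vinf γ Cm s t : ℝ}

lemma intervalIntegrable_of_continuousOn_Ici (hV : ContinuousOn V (Set.Ici 0)) (hs : 0 ≤ s)
    (hst : s ≤ t) : IntervalIntegrable V volume s t :=
  (hV.mono fun _ hx => hs.trans hx.1).intervalIntegrable_of_Icc hst

lemma le_sub_avg_of_deficit_lower {S : ℝ} (hV : ContinuousOn V (Set.Ici 0))
    (hlow : ∀ σ, 0 ≤ σ → γ * exp (-Cm * σ) ≤ Vinf - V σ) (hγ : 0 ≤ γ) (hCm : 0 < Cm)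
    (hs : 0 ≤ s) (hsS : s ≤ S) (ht : S + log 2 / Cm ≤ t) :
    γ * (exp (-Cm * S) / (2 * Cm * t)) ≤ Vinf - avg V s t := by
  have hst : s < t := by linarith [div_pos (log_pos one_lt_two) hCm]
  have hVi := intervalIntegrable_of_continuousOn_Ici hV hs hst.le
  have hexpi : IntervalIntegrable (fun x => γ * exp (-Cm * x)) volume s t := by
    apply Continuous.intervalIntegrable; fun_prop
  calc γ * (exp (-Cm * S) / (2 * Cm * t))
      ≤ γ * avg (fun x => exp (-Cm * x)) s t :=
        mul_le_mul_of_nonneg_left (exp_neg_mul_div_le_avg hCm hs hsS ht) hγ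
    _ = avg (fun x => γ * exp (-Cm * x)) s t := (avg_const_mul γ).symm
    _ ≤ avg (fun x => Vinf - V x) s t :=
        avg_mono_on hst hexpi (intervalIntegrable_const.sub hVi) fun x hx => hlow x (hs.trans hx.1)
    _ = Vinf - avg V s t := avg_const_sub Vinf hst.ne hVi

/-- The point `S = log 4 / C₊` lies in the set whose minimum is `s₀(t)`. -/
lemma half_add_avg_le_log_four_div {Cp A B L : ℝ} {d : ℕ} (hV : ContinuousOn V (Set.Ici 0))
    (hest : ∀ σ, 0 ≤ σ → γ * exp (-Cm * σ) ≤ Vinf - V σ ∧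
      Vinf - V σ ≤ deficitEnvelope γ Cp A B L d σ)
    (hγ : 0 ≤ γ) (hCp : 0 < Cp) (hA : 0 ≤ A) (hB : 0 ≤ B) (hL : 0 < L)
    (hγA : γ ^ 2 * A ≤ 1 / 8) (hBL : B / L ^ (d - 1) ≤ γ / 8) (ht : log 4 / Cp < t) :
    (Vinf - γ + avg V (log 4 / Cp) t) / 2 ≤ V (log 4 / Cp) := by
  have hS : 0 ≤ log 4 / Cp := div_nonneg (log_nonneg (by norm_num)) hCp.le
  have havg : avg V (log 4 / Cp) t ≤ Vinf :=
    avg_le_of_le_on ht (intervalIntegrable_of_continuousOn_Ici hV hS ht.le) fun x hx => by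
      linarith [(hest x (hS.trans hx.1)).1, mul_nonneg hγ (exp_pos (-Cm * x)).le]
  linarith [(hest _ hS).2.trans (deficitEnvelope_log_four_div_le hγ hCp hA hB hL hγA hBL)]

end Velocity

theorem velocity_minus_average_lower_bound_general (d : ℕ)
    (Cp Cm A B Vinf : ℝ) (hCp : 0 < Cp) (hCpm : Cp ≤ Cm)
    (hA : 0 < A) (hB : 0 < B) :
    ∃ γ₀ c₀ tbar cbar Cstar : ℝ,
      0 < γ₀ ∧ 0 < c₀ ∧ 0 < tbar ∧ 0 < cbar ∧ 0 < Cstar ∧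
      ∀ γ : ℝ, 0 < γ → γ ≤ γ₀ →
        ∀ L : ℝ, 1 ≤ L → (L ^ (d - 1) : ℝ)⁻¹ ≤ c₀ * γ →
          0 < Vinf - γ →
          ∀ V : ℝ → ℝ, ContinuousOn V (Set.Ici 0) → V 0 = Vinf - γ →
            (∀ s : ℝ, 0 < s → Vinf - γ < V s) →
            (∀ s : ℝ, 0 ≤ s →
              γ * Real.exp (-Cm * s) ≤ Vinf - V s ∧
              Vinf - V s ≤ γ * Real.exp (-Cp * s) + γ ^ 3 * (A / (1 + s) ^ (d + 2)) +
                B / (L ^ (d - 1) * (1 + s / L) ^ (d - 1))) →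
            ∀ t : ℝ, tbar / 2 ≤ t → t < cbar * γ * L ^ (d - 1) →
              ∀ s₀ : ℝ,
                (s₀ ∈ {s : ℝ | s ∈ Set.Ioo 0 t ∧ (Vinf - γ + avg V s t) / 2 ≤ V s} ∧
                  ∀ s ∈ {s : ℝ | s ∈ Set.Ioo 0 t ∧ (Vinf - γ + avg V s t) / 2 ≤ V s},
                    s₀ ≤ s) →
                ∀ s : ℝ, 0 < s → s ≤ s₀ →
                  Cstar * γ / t ≤ V t - avg V s t := by
  have hCm : 0 < Cm := hCp.trans_le hCpm
  set S := log 4 / Cp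
  set κ := exp (-Cm * S) / (12 * Cm)
  have hS : 0 < S := div_pos (log_pos (by norm_num)) hCp
  have hκ : 0 < κ := by positivity
  have hlog : 0 < log 2 / Cm := div_pos (log_pos one_lt_two) hCm
  have hT : 0 < 2 / (Cp ^ 2 * κ) := by positivity
  refine ⟨√(min (1 / 8) κ / A), 1 / (8 * B), 2 * (S + log 2 / Cm + 2 / (Cp ^ 2 * κ)), κ / B,
    3 * κ, by positivity, by positivity, by positivity, by positivity, by positivity, ?_⟩
  intro γ hγ hγ₀ L hL hLγ _ V hV _ _ hest t ht ht' s₀ ⟨_, hs₀min⟩ s hs hss₀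
  have htS : S + log 2 / Cm ≤ t := by linarith
  have htκ : 2 / (Cp ^ 2 * κ) ≤ t := by linarith
  have hSt : S < t := by linarith
  have hγA : γ ^ 2 * A ≤ min (1 / 8) κ := by
    rwa [le_sqrt hγ.le (by positivity), le_div_iff₀ hA] at hγ₀
  have hL0 : 0 < L := one_pos.trans_le hL
  have hLd : 0 < L ^ (d - 1) := by positivity
  have hBL : B / L ^ (d - 1) ≤ γ / 8 := by
    rw [one_div_mul_eq_div, inv_le_iff_one_le_mul₀ hLd, div_mul_eq_mul_div,
      le_div_iff₀ (by positivity)] at hLγ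
    rw [div_le_iff₀ hLd]; linarith
  have hBLt : B / L ^ (d - 1) ≤ κ * γ / t := by
    rw [div_mul_eq_mul_div, div_mul_eq_mul_div, lt_div_iff₀ hB] at ht'
    rw [div_le_div_iff₀ hLd (hS.trans hSt)]; linarith
  have hsS : s ≤ S := hss₀.trans (hs₀min S ⟨⟨hS, hSt⟩, half_add_avg_le_log_four_div hV hest
    hγ.le hCp hA.le hB.le hL0 (hγA.trans (min_le_left _ _)) hBL hSt⟩)
  have hlow := le_sub_avg_of_deficit_lower hV (fun σ hσ => (hest σ hσ).1) hγ.le hCm hs.le hsS htS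
  have hup := (hest t (hS.trans hSt).le).2.trans (deficitEnvelope_le_div hγ.le hCp hA.le hB.le
    hL0 hκ htκ (hγA.trans (min_le_right _ _)) hBLt)
  linarith [show γ * (exp (-Cm * S) / (2 * Cm * t)) = 2 * (3 * κ * γ / t) by
    simp only [κ]; field_simp; ring]

/-- Claim (iv) of Appendix A.3: for `t̄/2 ≤ t < c̄ γ L^{d-1}` and `0 < s ≤ s₀(t)`
(where `s₀(t)` is the minimum of `{s ∈ (0,t) : V(s) ≥ (V₀ + ⟨V⟩_{s,t})/2}`),
one has `V(t) - ⟨V⟩_{s,t} ≥ C_* γ / t`. -/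
theorem velocity_minus_average_lower_bound (d : ℕ) (hd : 2 ≤ d)
    (Cp Cm A B Vinf : ℝ) (hCp : 0 < Cp) (hCpm : Cp ≤ Cm)
    (hA : 0 < A) (hB : 0 < B) (hVinf : 0 < Vinf) :
    ∃ γ₀ c₀ tbar cbar Cstar : ℝ,
      0 < γ₀ ∧ 0 < c₀ ∧ 0 < tbar ∧ 0 < cbar ∧ 0 < Cstar ∧
      ∀ γ : ℝ, 0 < γ → γ ≤ γ₀ →
        ∀ L : ℝ, 1 ≤ L → (L ^ (d - 1) : ℝ)⁻¹ ≤ c₀ * γ →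
          0 < Vinf - γ →
          ∀ V : ℝ → ℝ, ContinuousOn V (Set.Ici 0) → V 0 = Vinf - γ →
            (∀ s : ℝ, 0 < s → Vinf - γ < V s) →
            (∀ s : ℝ, 0 ≤ s →
              γ * Real.exp (-Cm * s) ≤ Vinf - V s ∧
              Vinf - V s ≤ γ * Real.exp (-Cp * s) + γ ^ 3 * (A / (1 + s) ^ (d + 2)) +
                B / (L ^ (d - 1) * (1 + s / L) ^ (d - 1))) →
            ∀ t : ℝ, tbar / 2 ≤ t → t < cbar * γ * L ^ (d - 1) →
              ∀ s₀ : ℝ,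
                (s₀ ∈ {s : ℝ | s ∈ Set.Ioo 0 t ∧ (Vinf - γ + avg V s t) / 2 ≤ V s} ∧
                  ∀ s ∈ {s : ℝ | s ∈ Set.Ioo 0 t ∧ (Vinf - γ + avg V s t) / 2 ≤ V s},
                    s₀ ≤ s) →
                ∀ s : ℝ, 0 < s → s ≤ s₀ →
                  Cstar * γ / t ≤ V t - avg V s t :=
  velocity_minus_average_lower_bound_general d Cp Cm A B Vinf hCp hCpm hA hB
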